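/- For every ε > 0 there exists Δ₀ such that for all Δ ≥ Δ₀, every finite triangle-free simple graph G on n vertices with maximum degree at most Δ contains an independent set of size at least n·log Δ / ((1+ε)·Δ). -/

import Mathlib

def IndepFinset {V : Type*} (G : SimpleGraph V) (s : Finset V) : Prop :=
  ∀ u ∈ s, ∀ v ∈ s, ¬ G.Adj u v

/-!
Hard-core model argument. Weight each independent set `I` by `λ ^ #I`. Fix a vertex `v` and
condition on `J = I \ N[v]`. Given `J`, either `I ∩ N[v] = {v}`, or — because the graph is
triangle-free — `I ∩ N[v]` is an arbitrary subset of the `m` neighbours of `v` with no neighbour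
in `J`. Hence the conditional law is explicit, and a two-case estimate (few or many free
neighbours) gives
  `B ≤ t · P[v ∈ I] + (1 - t) / Δ · E #(I ∩ N(v))`.
Summing over `v` and using `∑ v, #(I ∩ N(v)) ≤ Δ · #I` yields `E #I ≥ n B`. With `λ = 1 / log Δ`
and `t = ε / (2 (1 + ε))`, the value `B = log Δ / ((1 + ε) Δ)` is admissible for large `Δ`.
-/

open Finset Real Filter

theorem Finset.one_add_mul_sum_powerset_card_mul_pow {α R : Type*} [DecidableEq α] [CommRing R]
    (s : Finset α) (x : R) :
    (1 + x) * ∑ t ∈ s.powerset, (#t : R) * x ^ #t = #s * x * (1 + x) ^ #s := by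
  induction s using Finset.induction_on with
  | empty => simp
  | insert a s ha ih =>
    have hcard : ∀ t ∈ s.powerset, #(insert a t) = #t + 1 := fun t ht =>
      card_insert_of_notMem fun h => ha (mem_powerset.1 ht h)
    have hpow := sum_pow_mul_eq_add_pow x 1 s
    simp only [one_pow, mul_one] at hpow
    have hins : ∑ t ∈ s.powerset, (#(insert a t) : R) * x ^ #(insert a t)
        = x * ∑ t ∈ s.powerset, (#t : R) * x ^ #t + x * ∑ t ∈ s.powerset, x ^ #t := by
      rw [mul_sum, mul_sum, ← sum_add_distrib]
      exact sum_congr rfl fun t ht => by rw [hcard t ht]; push_cast; ring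
    rw [sum_powerset_insert ha, hins, card_insert_of_notMem ha, hpow]
    push_cast
    linear_combination (1 + x) * ih

theorem one_add_pow_le_exp_of_mul_le {x y : ℝ} (hx : 0 ≤ x) {m : ℕ} (hm : m * x ≤ y) :
    (1 + x) ^ m ≤ exp y :=
  calc (1 + x) ^ m ≤ exp x ^ m := by gcongr; linarith [add_one_le_exp x]
    _ = exp (m * x) := by rw [← exp_nat_mul]
    _ ≤ exp y := exp_le_exp.2 hm

theorem hardcore_fibre_nonneg {α : Type*} [DecidableEq α] {lam t B c : ℝ} (hlam : 0 ≤ lam)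
    (hB : 0 ≤ B) (hc : 0 < c) (h : B * exp (B * (1 + lam) / c) ≤ lam * (t - B)) (F : Finset α) :
    0 ≤ (t - B) * lam + ∑ S ∈ F.powerset, (c * #S - B) * lam ^ #S := by
  have hZ := sum_pow_mul_eq_add_pow lam 1 F
  simp only [one_pow, mul_one] at hZ
  have hD := F.one_add_mul_sum_powerset_card_mul_pow lam
  have hpow : 0 ≤ (1 + lam) ^ #F := by positivity
  -- Few free neighbours are paid for by the `t`-term, many by the `c`-term.
  have key : B * ((1 + lam) ^ #F * (1 + lam)) ≤
      (1 + lam) * (lam * (t - B)) + c * #F * lam * (1 + lam) ^ #F := by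
    rcases lt_or_ge (c * #F * lam) (B * (1 + lam)) with hm | hm
    · have hexp : (1 + lam) ^ #F ≤ exp (B * (1 + lam) / c) :=
        one_add_pow_le_exp_of_mul_le hlam (by rw [le_div_iff₀ hc]; linarith)
      have : B * (1 + lam) ^ #F ≤ lam * (t - B) := (mul_le_mul_of_nonneg_left hexp hB).trans h
      nlinarith [mul_nonneg (mul_nonneg hc.le (Nat.cast_nonneg #F)) hlam]
    · have hgap : 0 ≤ lam * (t - B) := (mul_nonneg hB (exp_pos _).le).trans h
      nlinarith [mul_le_mul_of_nonneg_right hm hpow]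
  refine nonneg_of_mul_nonneg_right (a := 1 + lam) ?_ (by linarith)
  simp only [sub_mul, sum_sub_distrib, mul_assoc, ← mul_sum, hZ]
  linear_combination key - c * hD

namespace SimpleGraph

variable {V : Type*} (G : SimpleGraph V) [DecidableRel G.Adj]

instance : DecidablePred (IndepFinset G) := fun s =>
  inferInstanceAs (Decidable (∀ u ∈ s, ∀ v ∈ s, ¬ G.Adj u v))

variable [Fintype V]

def indepFinsets : Finset (Finset V) := {s | IndepFinset G s}

/-- `Z(λ) · 𝔼[f I]` for the hard-core model at fugacity `λ`. -/
def hardcoreSum (lam : ℝ) (f : Finset V → ℝ) : ℝ :=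
  ∑ s ∈ G.indepFinsets, f s * lam ^ #s

variable {G}

theorem mem_indepFinsets {s : Finset V} : s ∈ G.indepFinsets ↔ IndepFinset G s := by
  simp [indepFinsets]

theorem hardcoreSum_mono {lam : ℝ} (hlam : 0 ≤ lam) {f g : Finset V → ℝ}
    (hfg : ∀ s ∈ G.indepFinsets, f s ≤ g s) : G.hardcoreSum lam f ≤ G.hardcoreSum lam g :=
  sum_le_sum fun s hs => mul_le_mul_of_nonneg_right (hfg s hs) (pow_nonneg hlam _)

theorem sum_hardcoreSum {ι : Type*} (t : Finset ι) (lam : ℝ) (f : ι → Finset V → ℝ) :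
    ∑ i ∈ t, G.hardcoreSum lam (f i) = G.hardcoreSum lam fun s => ∑ i ∈ t, f i s := by
  simp only [hardcoreSum, sum_mul]
  exact sum_comm

theorem exists_nonneg_of_hardcoreSum_nonneg {lam : ℝ} (hlam : 0 < lam) {f : Finset V → ℝ}
    (hf : 0 ≤ G.hardcoreSum lam f) : ∃ s ∈ G.indepFinsets, 0 ≤ f s := by
  have hne : G.indepFinsets.Nonempty := ⟨∅, mem_indepFinsets.2 (by simp [IndepFinset])⟩
  obtain ⟨s, hs, hfs⟩ := exists_le_of_sum_le hne (f := fun _ => 0)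
    (g := fun s => f s * lam ^ #s) (by rwa [sum_const_zero])
  exact ⟨s, hs, nonneg_of_mul_nonneg_left hfs (pow_pos hlam _)⟩

variable [DecidableEq V]

theorem sum_card_inter_neighborFinset (s : Finset V) :
    ∑ v, #(s ∩ G.neighborFinset v) = ∑ u ∈ s, G.degree u := by
  convert sum_card_bipartiteAbove_eq_sum_card_bipartiteBelow (s := univ) (t := s) (r := G.Adj)
    using 2 with v _ u _
  · rw [bipartiteAbove, ← filter_mem_eq_inter]
    simp only [mem_neighborFinset]
  · rw [bipartiteBelow, ← card_neighborFinset_eq_degree]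
    congr 1
    ext w
    simp [adj_comm]

variable (G) in
def outerIndepFinsets (v : V) : Finset (Finset V) :=
  {J ∈ G.indepFinsets | Disjoint J (insert v (G.neighborFinset v))}

variable (G) in
def freeNeighborFinset (v : V) (J : Finset V) : Finset V :=
  {u ∈ G.neighborFinset v | ∀ w ∈ J, ¬ G.Adj u w}

section Fibre

variable {v : V} {J : Finset V}

theorem freeNeighborFinset_subset : G.freeNeighborFinset v J ⊆ G.neighborFinset v :=
  filter_subset _ _

theorem disjoint_neighborFinset_of_mem_outerIndepFinsets (hJ : J ∈ G.outerIndepFinsets v) :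
    Disjoint J (G.neighborFinset v) :=
  (mem_filter.1 hJ).2.mono_right (subset_insert _ _)

theorem notMem_of_mem_outerIndepFinsets (hJ : J ∈ G.outerIndepFinsets v) : v ∉ J :=
  fun hv => Finset.disjoint_left.1 (mem_filter.1 hJ).2 hv (mem_insert_self _ _)

theorem indepFinset_insert (hJ : J ∈ G.outerIndepFinsets v) : IndepFinset G (insert v J) := by
  have hJi := mem_indepFinsets.1 (mem_filter.1 hJ).1
  have hv : ∀ w ∈ J, ¬ G.Adj v w := fun w hw hvw =>
    Finset.disjoint_left.1 (disjoint_neighborFinset_of_mem_outerIndepFinsets hJ) hw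
      ((G.mem_neighborFinset v w).2 hvw)
  intro a ha b hb hab
  rcases mem_insert.1 ha with rfl | haJ <;> rcases mem_insert.1 hb with rfl | hbJ
  · exact G.irrefl hab
  · exact hv b hbJ hab
  · exact hv a haJ hab.symm
  · exact hJi a haJ b hbJ hab

theorem indepFinset_union (h3 : G.CliqueFree 3) (hJ : J ∈ G.outerIndepFinsets v)
    {S : Finset V} (hS : S ⊆ G.freeNeighborFinset v J) : IndepFinset G (J ∪ S) := by
  have hJi := mem_indepFinsets.1 (mem_filter.1 hJ).1
  have hfree : ∀ u ∈ S, G.Adj v u ∧ ∀ w ∈ J, ¬ G.Adj u w := fun u hu => by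
    simpa [freeNeighborFinset] using hS hu
  intro a ha b hb hab
  rcases mem_union.1 ha with ha | ha <;> rcases mem_union.1 hb with hb | hb
  · exact hJi a ha b hb hab
  · exact (hfree b hb).2 a ha hab.symm
  · exact (hfree a ha).2 b hb hab
  · exact isIndepSet_neighborSet_of_triangleFree G h3 v (hfree a ha).1 (hfree b hb).1
      (G.ne_of_adj hab) hab

theorem eq_insert_or_eq_union_of_indepFinset {s : Finset V} (hs : IndepFinset G s) :
    s = insert v (s \ insert v (G.neighborFinset v)) ∨
      ∃ S ⊆ G.freeNeighborFinset v (s \ insert v (G.neighborFinset v)),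
        s = s \ insert v (G.neighborFinset v) ∪ S := by
  by_cases hv : v ∈ s
  · left
    ext x
    simp only [mem_insert, Finset.mem_sdiff, mem_neighborFinset]
    by_cases hxv : x = v
    · simp [hxv, hv]
    · simpa [hxv] using fun hx hvx => hs v hv x hx hvx
  · right
    refine ⟨s ∩ G.neighborFinset v, fun u hu => ?_, ?_⟩
    · simp only [freeNeighborFinset, mem_filter, mem_inter, Finset.mem_sdiff] at hu ⊢
      exact ⟨hu.2, fun w hw => hs u hu.1 w hw.1⟩
    · rw [← inter_insert_of_notMem hv, sdiff_union_inter]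

theorem insert_sdiff_insert_neighborFinset (hJ : J ∈ G.outerIndepFinsets v) :
    insert v J \ insert v (G.neighborFinset v) = J := by
  rw [insert_sdiff_of_mem _ (mem_insert_self _ _), sdiff_eq_self_of_disjoint (mem_filter.1 hJ).2]

theorem union_sdiff_insert_neighborFinset (hJ : J ∈ G.outerIndepFinsets v)
    {S : Finset V} (hS : S ⊆ G.neighborFinset v) :
    (J ∪ S) \ insert v (G.neighborFinset v) = J := by
  rw [union_sdiff_distrib, sdiff_eq_self_of_disjoint (mem_filter.1 hJ).2,
    sdiff_eq_empty_iff_subset.2 (hS.trans (subset_insert _ _)), union_empty]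

theorem filter_sdiff_insert_neighborFinset_eq (h3 : G.CliqueFree 3)
    (hJ : J ∈ G.outerIndepFinsets v) :
    {s ∈ G.indepFinsets | s \ insert v (G.neighborFinset v) = J} =
      insert (insert v J) ((G.freeNeighborFinset v J).powerset.image (J ∪ ·)) := by
  ext s
  simp only [mem_filter, mem_insert, mem_image, mem_powerset, mem_indepFinsets]
  constructor
  · rintro ⟨hs, rfl⟩
    rcases eq_insert_or_eq_union_of_indepFinset (v := v) hs with h | ⟨S, hS, h⟩
    exacts [Or.inl h, Or.inr ⟨S, hS, h.symm⟩]
  · rintro (rfl | ⟨S, hS, rfl⟩)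
    · exact ⟨indepFinset_insert hJ, insert_sdiff_insert_neighborFinset hJ⟩
    · exact ⟨indepFinset_union h3 hJ hS,
        union_sdiff_insert_neighborFinset hJ (hS.trans freeNeighborFinset_subset)⟩

end Fibre

theorem hardcoreSum_eq_sum_outerIndepFinsets (h3 : G.CliqueFree 3) (v : V) (lam : ℝ)
    (f : Finset V → ℝ) :
    G.hardcoreSum lam f = ∑ J ∈ G.outerIndepFinsets v, lam ^ #J *
      (f (insert v J) * lam + ∑ S ∈ (G.freeNeighborFinset v J).powerset, f (J ∪ S) * lam ^ #S) := by
  have hmaps : ∀ s ∈ G.indepFinsets,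
      s \ insert v (G.neighborFinset v) ∈ G.outerIndepFinsets v := fun s hs =>
    mem_filter.2 ⟨mem_indepFinsets.2 fun a ha b hb =>
      mem_indepFinsets.1 hs a (Finset.mem_sdiff.1 ha).1 b (Finset.mem_sdiff.1 hb).1, sdiff_disjoint⟩
  rw [hardcoreSum, ← sum_fiberwise_of_maps_to hmaps]
  refine sum_congr rfl fun J hJ => ?_
  have hvJ := notMem_of_mem_outerIndepFinsets hJ
  have hdisj : ∀ S ∈ (G.freeNeighborFinset v J).powerset, Disjoint J S := fun S hS =>
    (disjoint_neighborFinset_of_mem_outerIndepFinsets hJ).mono_right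
      ((mem_powerset.1 hS).trans freeNeighborFinset_subset)
  rw [filter_sdiff_insert_neighborFinset_eq h3 hJ, sum_insert, sum_image,
    card_insert_of_notMem hvJ, mul_add, mul_sum]
  · refine congrArg₂ (· + ·) (by ring) (sum_congr rfl fun S hS => ?_)
    rw [card_union_of_disjoint (hdisj S hS), pow_add]
    ring
  · intro S₁ h₁ S₂ h₂ h
    simp only at h
    rw [← union_sdiff_cancel_left (hdisj S₁ h₁), h, union_sdiff_cancel_left (hdisj S₂ h₂)]
  · intro hmem
    obtain ⟨S, hS, h⟩ := mem_image.1 hmem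
    rcases mem_union.1 (h ▸ mem_insert_self v J) with hv | hv
    · exact hvJ hv
    · exact G.irrefl ((G.mem_neighborFinset v v).1
        (freeNeighborFinset_subset (mem_powerset.1 hS hv)))

variable (G) in
def localObservable (t c B : ℝ) (v : V) (s : Finset V) : ℝ :=
  t * (if v ∈ s then 1 else 0) + c * #(s ∩ G.neighborFinset v) - B

theorem hardcoreSum_localObservable_nonneg (h3 : G.CliqueFree 3) (v : V) {lam t B c : ℝ}
    (hlam : 0 ≤ lam) (hB : 0 ≤ B) (hc : 0 < c) (h : B * exp (B * (1 + lam) / c) ≤ lam * (t - B)) :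
    0 ≤ G.hardcoreSum lam (G.localObservable t c B v) := by
  rw [hardcoreSum_eq_sum_outerIndepFinsets h3 v]
  refine sum_nonneg fun J hJ => mul_nonneg (pow_nonneg hlam _) ?_
  have hvJ := notMem_of_mem_outerIndepFinsets hJ
  have hJN := disjoint_iff_inter_eq_empty.1 (disjoint_neighborFinset_of_mem_outerIndepFinsets hJ)
  have hvN : v ∉ G.neighborFinset v := fun hv => G.irrefl ((G.mem_neighborFinset v v).1 hv)
  refine (hardcore_fibre_nonneg hlam hB hc h (G.freeNeighborFinset v J)).trans_eq
    (congrArg₂ (· + ·) ?_ (sum_congr rfl fun S hS => ?_))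
  · rw [localObservable, if_pos (mem_insert_self v J), insert_inter_of_notMem hvN, hJN]
    simp
  · have hSN := (mem_powerset.1 hS).trans freeNeighborFinset_subset
    have hvS : v ∉ J ∪ S := fun hv => (mem_union.1 hv).elim hvJ fun hv => hvN (hSN hv)
    rw [localObservable, if_neg hvS, union_inter_distrib_right, hJN, empty_union,
      inter_eq_left.2 hSN]
    ring

theorem sum_localObservable_le {Δ : ℕ} (hdeg : ∀ v, G.degree v ≤ Δ) {t c B : ℝ} (hc : 0 ≤ c)
    (s : Finset V) :
    ∑ v, G.localObservable t c B v s ≤ (t + c * Δ) * #s - Fintype.card V * B := by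
  have hdeg_sum : (∑ v, #(s ∩ G.neighborFinset v) : ℝ) ≤ Δ * #s := by
    rw [← Nat.cast_sum, sum_card_inter_neighborFinset, mul_comm]
    exact_mod_cast sum_le_card_nsmul s _ Δ fun u _ => hdeg u
  simp only [localObservable, sum_sub_distrib, sum_add_distrib, ← mul_sum, sum_boole, sum_const,
    card_univ, nsmul_eq_mul, filter_mem_eq_inter, univ_inter]
  nlinarith [mul_le_mul_of_nonneg_left hdeg_sum hc]

theorem exists_indepFinset_card_ge (h3 : G.CliqueFree 3) {Δ : ℕ} (hΔ : 0 < Δ)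
    (hdeg : ∀ v, G.degree v ≤ Δ) {lam t B : ℝ} (hlam : 0 < lam) (hB : 0 ≤ B) (ht : t < 1)
    (h : B * exp (B * (1 + lam) * Δ / (1 - t)) ≤ lam * (t - B)) :
    ∃ I, IndepFinset G I ∧ Fintype.card V * B ≤ #I := by
  set c := (1 - t) / Δ
  have hc : 0 < c := div_pos (by linarith) (by exact_mod_cast hΔ)
  have hcΔ : c * Δ = 1 - t := div_mul_cancel₀ _ (by exact_mod_cast hΔ.ne')
  have hglobal : 0 ≤ G.hardcoreSum lam fun s => #s - Fintype.card V * B := by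
    refine (sum_nonneg (s := univ) fun v _ => hardcoreSum_localObservable_nonneg h3 v hlam.le hB hc
      (by rwa [div_div_eq_mul_div])).trans ?_
    rw [sum_hardcoreSum]
    refine hardcoreSum_mono hlam.le fun s _ => (sum_localObservable_le hdeg hc.le s).trans_eq ?_
    rw [hcΔ]
    ring
  obtain ⟨I, hI, hcard⟩ := exists_nonneg_of_hardcoreSum_nonneg hlam hglobal
  exact ⟨I, mem_indepFinsets.1 hI, by linarith⟩

end SimpleGraph

theorem eventually_sq_mul_exp_add_le_exp {ε : ℝ} (hε : 0 < ε) :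
    ∀ᶠ L in atTop, 0 < L ∧ L ^ 2 * exp (2 * (L + 1) / (2 + ε)) + L ≤ ε / 2 * exp L := by
  have hδ : 0 < ε / (2 + ε) := by positivity
  have hk : 0 < ε / 4 * exp (-(2 / (2 + ε))) := by positivity
  filter_upwards [(isLittleO_pow_exp_pos_mul_atTop 2 hδ).def hk, eventually_ge_atTop 1]
    with L hL hL1
  rw [norm_of_nonneg (by positivity), norm_of_nonneg (exp_pos _).le] at hL
  refine ⟨by linarith, ?_⟩
  have hsplit : exp L =
      exp (2 * (L + 1) / (2 + ε)) * (exp (ε / (2 + ε) * L) * exp (-(2 / (2 + ε)))) := by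
    rw [← exp_add, ← exp_add]
    congr 1
    field_simp
    ring
  have hE : 1 ≤ exp (2 * (L + 1) / (2 + ε)) := one_le_exp (by positivity)
  rw [hsplit]
  nlinarith [mul_le_mul_of_nonneg_left hL (by linarith : (0 : ℝ) ≤ exp (2 * (L + 1) / (2 + ε)))]

theorem shearer_parameters_admissible {ε L : ℝ} (hε : 0 < ε) (hL : 0 < L)
    (h : L ^ 2 * exp (2 * (L + 1) / (2 + ε)) + L ≤ ε / 2 * exp L) :
    L / ((1 + ε) * exp L) *
        exp (L / ((1 + ε) * exp L) * (1 + 1 / L) * exp L / (1 - ε / (2 * (1 + ε))))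
      ≤ 1 / L * (ε / (2 * (1 + ε)) - L / ((1 + ε) * exp L)) := by
  have hexpo : L / ((1 + ε) * exp L) * (1 + 1 / L) * exp L / (1 - ε / (2 * (1 + ε)))
      = 2 * (L + 1) / (2 + ε) := by
    rw [show 1 - ε / (2 * (1 + ε)) = (2 + ε) / (2 * (1 + ε)) by field_simp; ring]
    field_simp
  rw [hexpo, div_mul_eq_mul_div, div_le_iff₀ (by positivity)]
  field_simp
  nlinarith [exp_pos L]

/-- The Shearer-type bound recovered from the colouring results: for every `ε > 0` and
sufficiently large `Δ`, every triangle-free graph on `n` vertices with maximum degree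
at most `Δ` contains an independent set of size at least `n·log Δ/((1+ε)·Δ)`. -/
theorem shearer_independence_bound (ε : ℝ) (hε : 0 < ε) :
    ∃ Δ₀ : ℕ, ∀ Δ : ℕ, Δ₀ ≤ Δ →
      ∀ (V : Type) [Fintype V] (G : SimpleGraph V) [DecidableRel G.Adj],
        G.CliqueFree 3 →
        (∀ v : V, G.degree v ≤ Δ) →
        ∃ I : Finset V, IndepFinset G I ∧
          (Fintype.card V : ℝ) * Real.log Δ / ((1 + ε) * Δ) ≤ (I.card : ℝ) := by
  have hlog : Tendsto (fun Δ : ℕ => log Δ) atTop atTop :=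
    tendsto_log_atTop.comp tendsto_natCast_atTop_atTop
  obtain ⟨Δ₀, hΔ₀⟩ :=
    (hlog.eventually (eventually_sq_mul_exp_add_le_exp hε)).exists_forall_of_atTop
  refine ⟨Δ₀, fun Δ hΔ V _ G _ h3 hdeg => ?_⟩
  classical
  obtain ⟨hL, hcond⟩ := hΔ₀ Δ hΔ
  have hΔpos : 0 < Δ := Nat.pos_of_ne_zero fun h => by simp [h] at hL
  have hparams := shearer_parameters_admissible hε hL hcond
  rw [exp_log (by exact_mod_cast hΔpos)] at hparams
  obtain ⟨I, hI, hcard⟩ := G.exists_indepFinset_card_ge h3 hΔpos hdeg (one_div_pos.2 hL)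
    (by positivity) (by rw [div_lt_one (by positivity)]; linarith) hparams
  exact ⟨I, hI, by rwa [mul_div_assoc]⟩
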